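/- Let D be an abelian category with a distinguished co-Giraud subcategory (D, C, j, r). Then the assignments (T, F) ↦ (T̂, F̂) and (X, Y) ↦ (r(X), r(Y)) give a one-to-one correspondence between torsion pairs (X, Y) on D satisfying jr(X) ⊆ X ⊆ ^⊥S and torsion pairs (T, F) on C. -/

import Mathlib

/-!
Two general facts carry the argument. A pair of classes `(T, F)` with `Hom(T, F) = 0`, in which
every object is an extension of an object of `F` by one of `T`, is a torsion pair, because then
`T = ^⊥F` and `F = T^⊥`; and a torsion pair is determined by its torsion class.

Since `j` is fully faithful, `rj ≅ 1`. Applying the exact functor `r` to the decomposition of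
`jZ` decomposes `Z`. For `A` in `D`, take the image `T ⊆ A` of the adjunct `jW → A` of the
torsion part `W ↪ rA`: then `rT ≅ W` and `r(A/T) ≅ rA/W`, and `T`, a quotient of `jW`, lies in
`^⊥S`. On `^⊥S` the functor `r` detects zero morphisms, since `r f = 0` forces `r(im f) = 0`.
-/

open CategoryTheory Limits CategoryTheory.Pretriangulated

universe w'' w' w v'' u'' v' u' v u

namespace TiltedGiraudPaper

section Basics

variable (C : Type u) [Category.{v} C]

/-- A class of objects is closed under extensions: for every short exact sequence,
if the two outer terms belong to the class, then so does the middle term. -/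
def ClosedUnderExtensions [HasZeroMorphisms C] (P : Set C) : Prop :=
  ∀ S : ShortComplex C, S.ShortExact → S.X₁ ∈ P → S.X₃ ∈ P → S.X₂ ∈ P

/-- A class of objects is closed under (existing small) inductive limits. -/
def ClosedUnderColimits (P : Set C) : Prop :=
  ∀ {J : Type v} [SmallCategory J] {F : J ⥤ C} (c : Cocone F),
    IsColimit c → (∀ j, F.obj j ∈ P) → c.pt ∈ P

/-- A class of objects is closed under (existing small) projective limits. -/
def ClosedUnderLimits (P : Set C) : Prop :=
  ∀ {J : Type v} [SmallCategory J] {F : J ⥤ C} (c : Cone F),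
    IsLimit c → (∀ j, F.obj j ∈ P) → c.pt ∈ P

/-- A torsion class: a class of objects closed under inductive limits and extensions. -/
def IsTorsionClass [HasZeroMorphisms C] (P : Set C) : Prop :=
  ClosedUnderColimits C P ∧ ClosedUnderExtensions C P

/-- A torsion-free class: a class of objects closed under projective limits and extensions. -/
def IsTorsionFreeClass [HasZeroMorphisms C] (P : Set C) : Prop :=
  ClosedUnderLimits C P ∧ ClosedUnderExtensions C P

/-- A Serre class: for every short exact sequence, the middle term belongs to the class
if and only if both outer terms do. -/
def IsSerreClass [HasZeroMorphisms C] (P : Set C) : Prop :=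
  ∀ S : ShortComplex C, S.ShortExact → (S.X₂ ∈ P ↔ (S.X₁ ∈ P ∧ S.X₃ ∈ P))

/-- A torsion pair `(torsion, torsionFree)` on an abelian category: a torsion class and a
torsion-free class with no nonzero morphisms from the first to the second, such that every
object is an extension of a torsion-free object by a torsion object. -/
structure TorsionPair [HasZeroMorphisms C] where
  torsion : Set C
  torsionFree : Set C
  isTorsionClass : IsTorsionClass C torsion
  isTorsionFreeClass : IsTorsionFreeClass C torsionFree
  hom_eq_zero : ∀ ⦃T F : C⦄, T ∈ torsion → F ∈ torsionFree → ∀ f : T ⟶ F, f = 0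
  exists_ses : ∀ A : C, ∃ (T F : C) (f : T ⟶ A) (g : A ⟶ F) (w : f ≫ g = 0),
    T ∈ torsion ∧ F ∈ torsionFree ∧ (ShortComplex.mk f g w).ShortExact

end Basics

section Functors

variable {C : Type u} [Category.{v} C] {D : Type u'} [Category.{v'} D]

/-- The essential image of a class of objects under a functor. -/
def imageSet (L : C ⥤ D) (P : Set C) : Set D :=
  {Y | ∃ X, X ∈ P ∧ Nonempty (L.obj X ≅ Y)}

/-- The preimage of a class of objects under a functor. -/
def preimageSet (L : C ⥤ D) (P : Set D) : Set C :=
  {X | L.obj X ∈ P}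

/-- The kernel of a functor: the class of objects sent to a zero object. -/
def kerSet (L : C ⥤ D) : Set C :=
  {X | IsZero (L.obj X)}

end Functors

section Perp

variable {C : Type u} [Category.{v} C]

/-- `S^⊥`: the class of objects receiving no nonzero morphism from objects of `S`. -/
def rightPerp [HasZeroMorphisms C] (S : Set C) : Set C :=
  {Y | ∀ X ∈ S, ∀ f : X ⟶ Y, f = 0}

/-- `^⊥S`: the class of objects admitting no nonzero morphism to objects of `S`. -/
def leftPerp [HasZeroMorphisms C] (S : Set C) : Set C :=
  {X | ∀ Y ∈ S, ∀ f : X ⟶ Y, f = 0}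

/-- The class of morphisms whose kernel and cokernel belong to the class `S`. -/
def serreW [HasZeroMorphisms C] (S : Set C) : MorphismProperty C := fun X Y f =>
  (∃ (K : C) (k : K ⟶ X) (w : k ≫ f = 0), K ∈ S ∧ Nonempty (IsLimit (KernelFork.ofι k w))) ∧
  (∃ (Q : C) (q : Y ⟶ Q) (w : f ≫ q = 0), Q ∈ S ∧ Nonempty (IsColimit (CokernelCofork.ofπ q w)))

end Perp

/-- `L : C ⥤ D` exhibits `D` as the (Gabriel) quotient of `C` by the Serre class `S`:
`L` is exact, essentially surjective, its kernel is exactly `S`, and `L` is a localization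
of `C` at the class of morphisms with kernel and cokernel in `S`. -/
def IsSerreQuotient {C : Type u} [Category.{v} C] [HasZeroMorphisms C]
    {D : Type u'} [Category.{v'} D] (S : Set C) (L : C ⥤ D) : Prop :=
  Nonempty (PreservesFiniteLimits L) ∧ Nonempty (PreservesFiniteColimits L) ∧
  L.EssSurj ∧ (∀ X : C, IsZero (L.obj X) ↔ X ∈ S) ∧
  L.IsLocalization (serreW S)

lemma _root_.CategoryTheory.ShortComplex.ShortExact.isIso_f_of_g_eq_zero {C : Type u}
    [Category.{v} C] [Abelian C] {S : ShortComplex C} (hS : S.ShortExact) (hg : S.g = 0) :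
    IsIso S.f :=
  have := hS.epi_g
  hS.isIso_f_iff.mpr (IsZero.of_epi_eq_zero _ hg)

lemma _root_.CategoryTheory.ShortComplex.ShortExact.isIso_g_of_f_eq_zero {C : Type u}
    [Category.{v} C] [Abelian C] {S : ShortComplex C} (hS : S.ShortExact) (hf : S.f = 0) :
    IsIso S.g :=
  have := hS.mono_f
  hS.isIso_g_iff.mpr (IsZero.of_mono_eq_zero _ hf)

section Orthogonality

variable {C : Type u} [Category.{v} C]

lemma ClosedUnderColimits.mem_of_iso {P : Set C} (h : ClosedUnderColimits C P)
    {X Y : C} (e : X ≅ Y) (hX : X ∈ P) : Y ∈ P :=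
  h _ ((isColimitConstCocone (Discrete PUnit.{v + 1}) X).ofIsoColimit (Cocone.extendIso _ e))
    fun _ => hX

lemma ClosedUnderLimits.mem_of_iso {P : Set C} (h : ClosedUnderLimits C P)
    {X Y : C} (e : X ≅ Y) (hX : X ∈ P) : Y ∈ P :=
  h _ ((isLimitConstCone (Discrete PUnit.{v + 1}) X).ofIsoLimit (Cone.extendIso _ e))
    fun _ => hX

lemma mem_leftPerp_of_epi [HasZeroMorphisms C] {S : Set C} {X Y : C} (e : X ⟶ Y) [Epi e]
    (hX : X ∈ leftPerp S) : Y ∈ leftPerp S := fun Z hZ f =>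
  (cancel_epi e).1 (by rw [comp_zero]; exact hX Z hZ _)

variable [Abelian C]

lemma isTorsionClass_leftPerp (P : Set C) : IsTorsionClass C (leftPerp P) := by
  refine ⟨fun c hc hmem W hW f => hc.hom_ext fun i => ?_, fun S hS h₁ h₃ W hW f => ?_⟩
  · rw [comp_zero]
    exact hmem i W hW _
  · have := hS.epi_g
    have hf : S.f ≫ f = 0 := h₁ W hW _
    rw [← hS.exact.g_desc f hf, h₃ W hW (hS.exact.desc f hf), comp_zero]

lemma isTorsionFreeClass_rightPerp (P : Set C) : IsTorsionFreeClass C (rightPerp P) := by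
  refine ⟨fun c hc hmem W hW f => hc.hom_ext fun i => ?_, fun S hS h₁ h₃ W hW f => ?_⟩
  · rw [zero_comp]
    exact hmem i W hW _
  · have := hS.mono_f
    have hf : f ≫ S.g = 0 := h₃ W hW _
    rw [← hS.exact.lift_f f hf, h₁ W hW (hS.exact.lift f hf), zero_comp]

def HasTorsionDecomposition (T F : Set C) : Prop :=
  ∀ A : C, ∃ (X Y : C) (f : X ⟶ A) (g : A ⟶ Y) (w : f ≫ g = 0),
    X ∈ T ∧ Y ∈ F ∧ (ShortComplex.mk f g w).ShortExact

lemma exists_ses_of_shortExact {T F : Set C} {A : C} {S : ShortComplex C} (hS : S.ShortExact)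
    (h₁ : S.X₁ ∈ T) (h₃ : S.X₃ ∈ F) (e : S.X₂ ≅ A) :
    ∃ (X Y : C) (f : X ⟶ A) (g : A ⟶ Y) (w : f ≫ g = 0),
      X ∈ T ∧ Y ∈ F ∧ (ShortComplex.mk f g w).ShortExact :=
  ⟨S.X₁, S.X₃, S.f ≫ e.hom, e.inv ≫ S.g, by simp, h₁, h₃,
    ShortComplex.shortExact_of_iso
      (ShortComplex.isoMk (S₁ := S) (Iso.refl _) e (Iso.refl _)) hS⟩

variable {T F : Set C}

lemma leftPerp_subset_of_hasTorsionDecomposition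
    (hT : ∀ ⦃X Y : C⦄, (X ≅ Y) → X ∈ T → Y ∈ T) (h : HasTorsionDecomposition T F) :
    leftPerp F ⊆ T := fun A hA => by
  obtain ⟨X, Y, f, g, w, hX, hY, hS⟩ := h A
  have := hS.isIso_f_of_g_eq_zero (hA Y hY g)
  exact hT (asIso f) hX

lemma rightPerp_subset_of_hasTorsionDecomposition
    (hF : ∀ ⦃X Y : C⦄, (X ≅ Y) → X ∈ F → Y ∈ F) (h : HasTorsionDecomposition T F) :
    rightPerp T ⊆ F := fun A hA => by
  obtain ⟨X, Y, f, g, w, hX, hY, hS⟩ := h A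
  have := hS.isIso_g_of_f_eq_zero (hA X hX f)
  exact hF (asIso g).symm hY

def TorsionPair.ofHasTorsionDecomposition (T F : Set C)
    (hT : ∀ ⦃X Y : C⦄, (X ≅ Y) → X ∈ T → Y ∈ T) (hF : ∀ ⦃X Y : C⦄, (X ≅ Y) → X ∈ F → Y ∈ F)
    (hTF : T ⊆ leftPerp F) (h : HasTorsionDecomposition T F) : TorsionPair C where
  torsion := T
  torsionFree := F
  isTorsionClass := (hTF.antisymm (leftPerp_subset_of_hasTorsionDecomposition hT h)) ▸
    isTorsionClass_leftPerp F
  isTorsionFreeClass := (rightPerp_subset_of_hasTorsionDecomposition hF h).antisymm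
    (fun _ hY _ hX f => hTF hX _ hY f) ▸ isTorsionFreeClass_rightPerp T
  hom_eq_zero _ _ hX hY f := hTF hX _ hY f
  exists_ses := h

lemma TorsionPair.torsion_subset_leftPerp (p : TorsionPair C) :
    p.torsion ⊆ leftPerp p.torsionFree := fun _ hX _ hY f => p.hom_eq_zero hX hY f

lemma TorsionPair.torsionFree_subset_rightPerp (p : TorsionPair C) :
    p.torsionFree ⊆ rightPerp p.torsion := fun _ hY _ hX f => p.hom_eq_zero hX hY f

lemma TorsionPair.mem_torsion_of_iso (p : TorsionPair C) {X Y : C} (e : X ≅ Y)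
    (hX : X ∈ p.torsion) : Y ∈ p.torsion :=
  ClosedUnderColimits.mem_of_iso p.isTorsionClass.1 e hX

lemma TorsionPair.mem_torsionFree_of_iso (p : TorsionPair C) {X Y : C} (e : X ≅ Y)
    (hX : X ∈ p.torsionFree) : Y ∈ p.torsionFree :=
  ClosedUnderLimits.mem_of_iso p.isTorsionFreeClass.1 e hX

lemma TorsionPair.torsion_eq_leftPerp (p : TorsionPair C) : p.torsion = leftPerp p.torsionFree :=
  p.torsion_subset_leftPerp.antisymm
    (leftPerp_subset_of_hasTorsionDecomposition (fun _ _ => p.mem_torsion_of_iso)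
      p.exists_ses)

lemma TorsionPair.torsionFree_eq_rightPerp (p : TorsionPair C) :
    p.torsionFree = rightPerp p.torsion :=
  p.torsionFree_subset_rightPerp.antisymm
    (rightPerp_subset_of_hasTorsionDecomposition (fun _ _ => p.mem_torsionFree_of_iso)
      p.exists_ses)

lemma TorsionPair.ext_of_torsion {p q : TorsionPair C} (h : p.torsion = q.torsion) : p = q := by
  have h' : p.torsionFree = q.torsionFree := by
    rw [p.torsionFree_eq_rightPerp, q.torsionFree_eq_rightPerp, h]
  cases p
  cases q
  cases h
  cases h'
  rfl

end Orthogonality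

/-- The class `T̂` of the paper. -/
def hatTorsion {C : Type u} [Category.{v} C] {D : Type u'} [Category.{v'} D]
    [HasZeroMorphisms D] (r : D ⥤ C) (T : Set C) : Set D :=
  preimageSet r T ∩ leftPerp (kerSet r)

lemma mem_imageSet_of_iso {C : Type u} [Category.{v} C] {D : Type u'} [Category.{v'} D]
    {L : C ⥤ D} {P : Set C} {Y Y' : D} (e : Y ≅ Y') (hY : Y ∈ imageSet L P) :
    Y' ∈ imageSet L P :=
  let ⟨X, hX, ⟨e'⟩⟩ := hY
  ⟨X, hX, ⟨e' ≪≫ e⟩⟩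

section CoGiraud

variable {D : Type u} [Category.{v} D] {C : Type u'} [Category.{v'} C] {j : C ⥤ D} {r : D ⥤ C}

lemma obj_mem_leftPerp_kerSet [HasZeroMorphisms D] (adj : j ⊣ r) (W : C) :
    j.obj W ∈ leftPerp (kerSet r) := fun _ hS _ =>
  (adj.homEquiv _ _).injective (hS.eq_of_tgt _ _)

variable [Abelian D]

lemma unit_comp_map_factorThruImage_comp (adj : j ⊣ r) {W : C} {A : D} (i : W ⟶ r.obj A) :
    (adj.unit.app W ≫ r.map (Abelian.factorThruImage ((adj.homEquiv _ _).symm i))) ≫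
      r.map (Abelian.image.ι ((adj.homEquiv _ _).symm i)) = i := by
  rw [Category.assoc, ← r.map_comp, Abelian.image.fac]
  exact (adj.homEquiv_unit _ _ _).symm.trans ((adj.homEquiv _ _).apply_symm_apply i)

variable [Abelian C]

lemma eq_zero_of_map_eq_zero (r : D ⥤ C) [r.PreservesEpimorphisms] [r.PreservesMonomorphisms]
    {X Y : D} (hX : X ∈ leftPerp (kerSet r)) {f : X ⟶ Y} (hf : r.map f = 0) : f = 0 := by
  have hι : r.map (Abelian.image.ι f) = 0 := by
    rw [← cancel_epi (r.map (Abelian.factorThruImage f)), ← r.map_comp, Abelian.image.fac, hf,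
      comp_zero]
  rw [← Abelian.image.fac f, hX _ (IsZero.of_mono_eq_zero _ hι) (Abelian.factorThruImage f),
    zero_comp]

lemma hatTorsion_subset_leftPerp (r : D ⥤ C) [r.PreservesEpimorphisms]
    [r.PreservesMonomorphisms] (p : TorsionPair C) :
    hatTorsion r p.torsion ⊆ leftPerp (preimageSet r p.torsionFree) := fun _ hX _ hY f =>
  eq_zero_of_map_eq_zero r hX.2 (p.hom_eq_zero hX.1 hY (r.map f))

lemma mem_hatTorsion_of_iso (r : D ⥤ C) (p : TorsionPair C) {X Y : D} (e : X ≅ Y)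
    (hX : X ∈ hatTorsion r p.torsion) : Y ∈ hatTorsion r p.torsion :=
  ⟨p.mem_torsion_of_iso (r.mapIso e) hX.1, mem_leftPerp_of_epi e.hom hX.2⟩

lemma imageSet_torsion_subset_leftPerp (adj : j ⊣ r) (q : TorsionPair D)
    (hq : ∀ X ∈ q.torsion, j.obj (r.obj X) ∈ q.torsion) :
    imageSet r q.torsion ⊆ leftPerp (imageSet r q.torsionFree) := by
  rintro _ ⟨A, hA, ⟨eA⟩⟩ _ ⟨B, hB, ⟨eB⟩⟩ f
  have := adj.isLeftAdjoint
  have hadj : (adj.homEquiv _ _).symm (eA.hom ≫ f ≫ eB.inv) = 0 :=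
    q.hom_eq_zero (hq A hA) hB _
  have hg : eA.hom ≫ f ≫ eB.inv = 0 := (adj.homEquiv _ _).symm.injective
    (by rw [hadj, Adjunction.homEquiv_counit, j.map_zero, zero_comp])
  simpa using hg

lemma hatTorsion_imageSet [r.PreservesEpimorphisms] [r.PreservesMonomorphisms] (adj : j ⊣ r)
    (q : TorsionPair D) (hq : ∀ X ∈ q.torsion, j.obj (r.obj X) ∈ q.torsion)
    (hq' : q.torsion ⊆ leftPerp (kerSet r)) :
    hatTorsion r (imageSet r q.torsion) = q.torsion := by
  refine subset_antisymm (fun X hX => ?_) fun X hX => ⟨⟨X, hX, ⟨Iso.refl _⟩⟩, hq' hX⟩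
  rw [q.torsion_eq_leftPerp]
  exact fun Y hY f => eq_zero_of_map_eq_zero r hX.2
    (imageSet_torsion_subset_leftPerp adj q hq hX.1 _ ⟨Y, hY, ⟨Iso.refl _⟩⟩ _)

variable [j.Full] [j.Faithful]

lemma isIso_unit_comp_map_factorThruImage [r.PreservesEpimorphisms] (adj : j ⊣ r) {W : C}
    {A : D} (i : W ⟶ r.obj A) [Mono i] :
    IsIso (adj.unit.app W ≫ r.map (Abelian.factorThruImage ((adj.homEquiv _ _).symm i))) :=
  have := mono_of_mono_fac (unit_comp_map_factorThruImage_comp adj i)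
  isIso_of_mono_of_epi _

lemma leftAdjoint_obj_mem_hatTorsion (adj : j ⊣ r) (p : TorsionPair C) {X : D}
    (hX : X ∈ hatTorsion r p.torsion) : j.obj (r.obj X) ∈ hatTorsion r p.torsion :=
  ⟨p.mem_torsion_of_iso (asIso (adj.unit.app (r.obj X))) hX.1, obj_mem_leftPerp_kerSet adj _⟩

lemma imageSet_hatTorsion (adj : j ⊣ r) (p : TorsionPair C) :
    imageSet r (hatTorsion r p.torsion) = p.torsion := by
  refine subset_antisymm (fun _ ⟨X, hX, ⟨e⟩⟩ => p.mem_torsion_of_iso e hX.1) fun W hW => ?_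
  exact ⟨j.obj W, ⟨p.mem_torsion_of_iso (asIso (adj.unit.app W)) hW,
    obj_mem_leftPerp_kerSet adj W⟩, ⟨(asIso (adj.unit.app W)).symm⟩⟩

variable [PreservesFiniteLimits r] [PreservesFiniteColimits r]

lemma hasTorsionDecomposition_imageSet (adj : j ⊣ r) (q : TorsionPair D) :
    HasTorsionDecomposition (imageSet r q.torsion) (imageSet r q.torsionFree) := fun Z => by
  obtain ⟨X, Y, f, g, w, hX, hY, hS⟩ := q.exists_ses (j.obj Z)
  exact exists_ses_of_shortExact (hS.map_of_exact r) ⟨X, hX, ⟨Iso.refl _⟩⟩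
    ⟨Y, hY, ⟨Iso.refl _⟩⟩ (asIso (adj.unit.app Z)).symm

def imageTorsionPair (adj : j ⊣ r) (q : TorsionPair D)
    (hq : ∀ X ∈ q.torsion, j.obj (r.obj X) ∈ q.torsion) : TorsionPair C :=
  .ofHasTorsionDecomposition (imageSet r q.torsion) (imageSet r q.torsionFree)
    (fun _ _ => mem_imageSet_of_iso) (fun _ _ => mem_imageSet_of_iso)
    (imageSet_torsion_subset_leftPerp adj q hq) (hasTorsionDecomposition_imageSet adj q)

lemma hasTorsionDecomposition_hatTorsion (adj : j ⊣ r) (p : TorsionPair C) :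
    HasTorsionDecomposition (hatTorsion r p.torsion) (preimageSet r p.torsionFree) := fun A => by
  obtain ⟨W, V, i, g, w, hW, hV, hS⟩ := p.exists_ses (r.obj A)
  have := hS.mono_f
  set φ := (adj.homEquiv _ _).symm i
  set m := Abelian.image.ι φ
  have hcoker : r.obj (cokernel m) ≅ V :=
    PreservesCokernel.iso r m ≪≫ (cokernelEpiComp _ (r.map m)).symm ≪≫
      cokernelIsoOfEq (unit_comp_map_factorThruImage_comp adj i) ≪≫
      (cokernelIsCokernel i).coconePointUniqueUpToIso hS.gIsCokernel
  have := isIso_unit_comp_map_factorThruImage adj i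
  refine ⟨Abelian.image φ, cokernel m, m, cokernel.π m, cokernel.condition m,
    ⟨p.mem_torsion_of_iso (asIso (adj.unit.app W ≫ r.map (Abelian.factorThruImage φ))) hW, ?_⟩,
    p.mem_torsionFree_of_iso hcoker.symm hV,
    .mk' (ShortComplex.cokernelSequence_exact m) inferInstance inferInstance⟩
  exact mem_leftPerp_of_epi (Abelian.factorThruImage φ) (obj_mem_leftPerp_kerSet adj W)

def hatTorsionPair (adj : j ⊣ r) (p : TorsionPair C) : TorsionPair D :=
  .ofHasTorsionDecomposition (hatTorsion r p.torsion) (preimageSet r p.torsionFree)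
    (fun _ _ => mem_hatTorsion_of_iso r p) (fun _ _ e => p.mem_torsionFree_of_iso (r.mapIso e))
    (hatTorsion_subset_leftPerp r p) (hasTorsionDecomposition_hatTorsion adj p)

end CoGiraud

/-- **Theorem.** Let `(D, C, j, r)` be a distinguished co-Giraud subcategory.  There is a
one-to-one correspondence between torsion pairs `(X, Y)` on `D` with `jr(X) ⊆ X ⊆ ^⊥S`
(where `S = Ker r`) and torsion pairs `(T, F)` on `C`, given by `(X, Y) ↦ (r(X), r(Y))`
and `(T, F) ↦ (T̂, F̂)`. -/
theorem coGiraud_torsionPair_correspondence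
    {D : Type u} [Category.{v} D] [Abelian D]
    {C : Type u} [Category.{v} C] [Abelian C]
    (j : C ⥤ D) (r : D ⥤ C) (adj : j ⊣ r)
    [PreservesFiniteLimits r] [PreservesFiniteColimits r] [j.Full] [j.Faithful] :
    ∃ e : {q : TorsionPair D //
        (∀ X ∈ q.torsion, j.obj (r.obj X) ∈ q.torsion) ∧
        q.torsion ⊆ leftPerp (kerSet r)} ≃ TorsionPair C,
      (∀ q, (e q).torsion = imageSet r q.1.torsion ∧
            (e q).torsionFree = imageSet r q.1.torsionFree) ∧
      (∀ p, (e.symm p).1.torsion = preimageSet r p.torsion ∩ leftPerp (kerSet r) ∧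
            (e.symm p).1.torsionFree = preimageSet r p.torsionFree) :=
  ⟨{ toFun q := imageTorsionPair adj q.1 q.2.1
     invFun p := ⟨hatTorsionPair adj p, fun _ => leftAdjoint_obj_mem_hatTorsion adj p,
       Set.inter_subset_right⟩
     left_inv q := Subtype.ext <| TorsionPair.ext_of_torsion <|
       hatTorsion_imageSet adj q.1 q.2.1 q.2.2
     right_inv p := TorsionPair.ext_of_torsion <| imageSet_hatTorsion adj p },
    fun _ => ⟨rfl, rfl⟩, fun _ => ⟨rfl, rfl⟩⟩

end TiltedGiraudPaper
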